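/- arXiv:2104.13089 — 2 statements merged into one kernel-verified Lean document; each statement's English description precedes it below -/
import Mathlib

section
/- Let $n,r,k,t$ be positive integers with $n\ge r\ge t+1$ and $k\ge2$. Suppose $\mathcal{F}\subset\mathcal{L}_{n,r,k}$ is a maximal $t$-intersecting family with $\tau_t(\mathcal{F})=t+1$, let $\mathcal{T}$ be the set of its $t$-covers of size $t+1$ with $|\mathcal{T}|\ge2$, suppose $\mathcal{T}$ has a $t$-cover of size $t$, and set $\ell=|\bigcup_{T\in\mathcal{T}}T|$ with $\ell\ge t+3$. Then $|\mathcal{F}|\le(\ell-t)\binom{n-t-1}{r-t-1}k^{r-t-1}+\big((r-\ell+1)(r-t+1)+t\big)\binom{n-t-2}{r-t-2}k^{r-t-2}$. -/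
open Finset

attribute [local instance] Classical.propDecidable

/-- The ground set `[n] × [k]`. -/
def box (n k : ℕ) : Finset (ℕ × ℕ) := Finset.Icc 1 n ×ˢ Finset.Icc 1 k

/-- A `k`-signed set on `[n]`: a subset of `[n] × [k]` with pairwise distinct first coordinates. -/
def IsSigned (n k : ℕ) (T : Finset (ℕ × ℕ)) : Prop :=
  T ⊆ box n k ∧ (T.image Prod.fst).card = T.card

/-- `L n r k`: the collection of `k`-signed `r`-sets on `[n]`. -/
def L (n r k : ℕ) : Finset (Finset (ℕ × ℕ)) :=
  (box n k).powerset.filter (fun F => F.card = r ∧ (F.image Prod.fst).card = r)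

/-- A family is `t`-intersecting if any two members meet in at least `t` elements. -/
def IsTIntersecting (t : ℕ) (F : Finset (Finset (ℕ × ℕ))) : Prop :=
  ∀ A ∈ F, ∀ B ∈ F, t ≤ (A ∩ B).card

/-- `T` is a `t`-cover of the family `F`: a `k`-signed set meeting every member in ≥ `t` points. -/
def IsTCover (n k t : ℕ) (F : Finset (Finset (ℕ × ℕ))) (T : Finset (ℕ × ℕ)) : Prop :=
  IsSigned n k T ∧ ∀ A ∈ F, t ≤ (T ∩ A).card

/-- `F` is a maximal `t`-intersecting subfamily of `L n r k`. -/
def IsMaximalTIntersecting (n r k t : ℕ) (F : Finset (Finset (ℕ × ℕ))) : Prop :=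
  F ⊆ L n r k ∧ IsTIntersecting t F ∧
    ∀ G ⊆ L n r k, IsTIntersecting t G → F ⊆ G → G = F

/-- A `t`-intersecting family is trivial if all members contain a fixed `k`-signed `t`-set. -/
def IsTrivial (n k t : ℕ) (F : Finset (Finset (ℕ × ℕ))) : Prop :=
  ∃ T, IsSigned n k T ∧ T.card = t ∧ ∀ A ∈ F, T ⊆ A

/-- `Msig d = {(1,1),(2,1),…,(d,1)}`. -/
def Msig (d : ℕ) : Finset (ℕ × ℕ) := (Finset.Icc 1 d).image (fun x => (x, 1))

/-- The family `H₁(n,r,k,ℓ,t)`. -/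
def H1 (n r k l t : ℕ) : Finset (Finset (ℕ × ℕ)) :=
  (L n r k).filter (fun F =>
    (Msig t ⊆ F ∧ t + 1 ≤ (F ∩ Msig l).card) ∨
    (¬ Msig t ⊆ F ∧ (F ∩ Msig l).card = l - 1))

/-- The family `H₂(n,r,k,c,t)`. -/
def H2 (n r k c t : ℕ) : Finset (Finset (ℕ × ℕ)) :=
  (L n r k).filter (fun F =>
    (Msig t ⊆ F ∧ t + 1 ≤ (F ∩ Msig r).card) ∨
    (F ∩ Msig r = Msig t ∧ Msig c \ Msig r ⊆ F) ∨
    (¬ Msig t ⊆ F ∧ (F ∩ Msig r).card = r - 1 ∧ (F ∩ (Msig c \ Msig r)).card = 1))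

/-- The set of all `t`-covers of `F` of size `t+1`. -/
noncomputable def TauSet (n k t : ℕ) (F : Finset (Finset (ℕ × ℕ))) : Finset (Finset (ℕ × ℕ)) :=
  (box n k).powerset.filter (fun T => IsTCover n k t F T ∧ T.card = t + 1)

/-!
Every member of `𝒯` contains the `t`-set `S`, so with `E = ⋃ 𝒯 \ S` (of size `ℓ - t`) the
`t`-covers of size `t + 1` are exactly the sets `S + e`, `e ∈ E`. Since `τ_t(F) = t + 1`, some
`A₀ ∈ F` misses a point `s₀ ∈ S`. A member `A` of `F` now falls into one of three classes:
* `A ⊇ S + e` for some `e ∈ E`;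
* `A` misses some `s ∈ S`; testing `A` against the covers `S + e` gives `A ⊇ (S - s) ∪ E`;
* `S ⊆ A` and `A ∩ E = ∅`; then `A` meets `X = A₀ \ (S ∪ E)`, a set of at most `r - ℓ + 1`
  points, in some `x`. As `x ∉ ⋃ 𝒯`, `S + x` is not a `t`-cover: some `A₁ ∈ F` meets it in
  fewer than `t` points, so `A` contains a point `y` of `A₁ \ (S + x)`, a set of at most
  `r - t + 1` points.
So `A` contains one of `ℓ - t` sets of size `t + 1` or one of `t + (r - ℓ + 1)(r - t + 1)` sets of
size `t + 2`, and a fixed `m`-set lies in at most `C(n - m, r - m) k^(r - m)` members of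
`L_{n,r,k}`.
-/

section SignedSets

variable {α β : Type*}

noncomputable def signedSets (Q : Finset α) (K : Finset β) (s : ℕ) : Finset (Finset (α × β)) :=
  (Q ×ˢ K).powerset.filter fun A => A.card = s ∧ Set.InjOn Prod.fst (A : Set (α × β))

lemma mem_signedSets {Q : Finset α} {K : Finset β} {s : ℕ} {A : Finset (α × β)} :
    A ∈ signedSets Q K s ↔ A ⊆ Q ×ˢ K ∧ A.card = s ∧ Set.InjOn Prod.fst (A : Set (α × β)) := by
  rw [signedSets, mem_filter, mem_powerset]

lemma card_signedSets_zero_le (Q : Finset α) (K : Finset β) : (signedSets Q K 0).card ≤ 1 :=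
  card_le_one.mpr fun A hA B hB => by
    rw [card_eq_zero.mp (mem_signedSets.mp hA).2.1, card_eq_zero.mp (mem_signedSets.mp hB).2.1]

lemma signedSets_empty_succ (K : Finset β) (s : ℕ) : signedSets (∅ : Finset α) K (s + 1) = ∅ := by
  ext A
  simp only [mem_signedSets, empty_product, subset_empty, notMem_empty, iff_false]
  rintro ⟨rfl, hA, -⟩
  simp at hA

lemma signedSets_insert_succ_subset [DecidableEq α] [DecidableEq β] (q : α) (Q : Finset α)
    (K : Finset β) (s : ℕ) :
    signedSets (insert q Q) K (s + 1) ⊆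
      signedSets Q K (s + 1) ∪ K.biUnion fun j => (signedSets Q K s).image (insert (q, j)) := by
  intro A hA
  obtain ⟨hAQ, hAcard, hAinj⟩ := mem_signedSets.mp hA
  by_cases hqA : ∃ j, (q, j) ∈ A
  · obtain ⟨j, hj⟩ := hqA
    refine mem_union_right _ (mem_biUnion.mpr ⟨j, (mem_product.mp (hAQ hj)).2,
      mem_image.mpr ⟨A.erase (q, j), mem_signedSets.mpr ⟨?_, ?_, ?_⟩, insert_erase hj⟩⟩)
    · intro p hp
      obtain ⟨hpq, hpA⟩ := mem_erase.mp hp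
      obtain ⟨hp1, hp2⟩ := mem_product.mp (hAQ hpA)
      refine mem_product.mpr ⟨(mem_insert.mp hp1).resolve_left fun h => hpq ?_, hp2⟩
      exact hAinj hpA hj h
    · rw [card_erase_of_mem hj, hAcard, Nat.add_sub_cancel]
    · exact hAinj.mono (coe_subset.mpr (erase_subset _ _))
  · refine mem_union_left _ (mem_signedSets.mpr ⟨fun p hp => ?_, hAcard, hAinj⟩)
    obtain ⟨hp1, hp2⟩ := mem_product.mp (hAQ hp)
    refine mem_product.mpr ⟨(mem_insert.mp hp1).resolve_left fun h => hqA ⟨p.2, ?_⟩, hp2⟩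
    rwa [← h]

lemma card_signedSets_le [DecidableEq α] [DecidableEq β] (Q : Finset α) (K : Finset β) (s : ℕ) :
    (signedSets Q K s).card ≤ Q.card.choose s * K.card ^ s := by
  induction Q using Finset.induction_on generalizing s with
  | empty =>
    cases s with
    | zero => simpa using card_signedSets_zero_le ∅ K
    | succ s => simp [signedSets_empty_succ]
  | @insert q Q hq ih =>
    cases s with
    | zero => simpa using card_signedSets_zero_le (insert q Q) K
    | succ s =>
      calc (signedSets (insert q Q) K (s + 1)).card
          ≤ (signedSets Q K (s + 1)).card +
              ∑ j ∈ K, ((signedSets Q K s).image (insert (q, j))).card :=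
            (card_le_card (signedSets_insert_succ_subset q Q K s)).trans
              ((card_union_le _ _).trans (Nat.add_le_add_left card_biUnion_le _))
        _ ≤ Q.card.choose (s + 1) * K.card ^ (s + 1) +
              K.card * (Q.card.choose s * K.card ^ s) := by
            gcongr
            · exact ih (s + 1)
            · exact sum_le_card_nsmul _ _ _ fun j _ => card_image_le.trans (ih s)
        _ = (insert q Q).card.choose (s + 1) * K.card ^ (s + 1) := by
            rw [card_insert_of_notMem hq, Nat.choose_succ_succ']
            ring

end SignedSets

lemma injOn_fst_of_mem_L {n r k : ℕ} {A : Finset (ℕ × ℕ)} (hA : A ∈ L n r k) :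
    Set.InjOn Prod.fst (A : Set (ℕ × ℕ)) := by
  simp only [L, mem_filter] at hA
  rw [← card_image_iff, hA.2.2, hA.2.1]

lemma isSigned_of_subset_mem_L {n r k : ℕ} {A B : Finset (ℕ × ℕ)} (hA : A ∈ L n r k)
    (hBA : B ⊆ A) : IsSigned n k B :=
  ⟨hBA.trans (mem_powerset.mp (mem_filter.mp hA).1),
    card_image_iff.mpr ((injOn_fst_of_mem_L hA).mono (coe_subset.mpr hBA))⟩

/-- `A ↦ A \ B` sends the members of `L n r k` above `B` to signed sets on `[n] ∖ π₁(B)`. -/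
lemma card_filter_superset_le (n r k : ℕ) (B : Finset (ℕ × ℕ)) :
    ((L n r k).filter (B ⊆ ·)).card ≤ (n - B.card).choose (r - B.card) * k ^ (r - B.card) := by
  rcases ((L n r k).filter (B ⊆ ·)).eq_empty_or_nonempty with h | ⟨A₀, hA₀⟩
  · simp [h]
  obtain ⟨hA₀L, hBA₀⟩ := mem_filter.mp hA₀
  obtain ⟨hBbox, hBinj⟩ := isSigned_of_subset_mem_L hA₀L hBA₀
  set Q := Icc 1 n \ B.image Prod.fst
  have hQ : Q.card = n - B.card := by
    rw [card_sdiff_of_subset, hBinj, Nat.card_Icc, Nat.add_sub_cancel]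
    intro a ha
    obtain ⟨p, hp, rfl⟩ := mem_image.mp ha
    exact (mem_product.mp (hBbox hp)).1
  have hsub : (L n r k).filter (B ⊆ ·) ⊆
      (signedSets Q (Icc 1 k) (r - B.card)).image (· ∪ B) := by
    intro A hA
    obtain ⟨hAL, hBA⟩ := mem_filter.mp hA
    have hAinj := injOn_fst_of_mem_L hAL
    simp only [L, mem_filter, mem_powerset] at hAL
    refine mem_image.mpr ⟨A \ B, mem_signedSets.mpr ⟨fun p hp => ?_, ?_, ?_⟩,
      sdiff_union_of_subset hBA⟩
    · obtain ⟨hpA, hpB⟩ := mem_sdiff.mp hp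
      obtain ⟨hp1, hp2⟩ := mem_product.mp (hAL.1 hpA)
      refine mem_product.mpr ⟨mem_sdiff.mpr ⟨hp1, fun hpB' => hpB ?_⟩, hp2⟩
      obtain ⟨b, hb, hbp⟩ := mem_image.mp hpB'
      rwa [← hAinj (hBA hb) hpA hbp]
    · rw [card_sdiff_of_subset hBA, hAL.2.1]
    · exact hAinj.mono (coe_subset.mpr sdiff_subset)
  calc ((L n r k).filter (B ⊆ ·)).card
      ≤ (signedSets Q (Icc 1 k) (r - B.card)).card := (card_le_card hsub).trans card_image_le
    _ ≤ (n - B.card).choose (r - B.card) * k ^ (r - B.card) := by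
      simpa [hQ] using card_signedSets_le Q (Icc 1 k) (r - B.card)

lemma card_filter_exists_subset_le {ι : Type*} (n r k m : ℕ) (I : Finset ι)
    (B : ι → Finset (ℕ × ℕ)) (hB : ∀ i ∈ I, (B i).card = m) :
    ((L n r k).filter fun A => ∃ i ∈ I, B i ⊆ A).card ≤
      I.card * ((n - m).choose (r - m) * k ^ (r - m)) := by
  have hsub : ((L n r k).filter fun A => ∃ i ∈ I, B i ⊆ A) ⊆
      I.biUnion fun i => (L n r k).filter (B i ⊆ ·) := by
    intro A hA
    obtain ⟨hAL, i, hi, hBA⟩ := mem_filter.mp hA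
    exact mem_biUnion.mpr ⟨i, hi, mem_filter.mpr ⟨hAL, hBA⟩⟩
  refine (card_le_card hsub).trans (card_biUnion_le.trans (sum_le_card_nsmul _ _ _ fun i hi => ?_))
  simpa [hB i hi] using card_filter_superset_le n r k (B i)

section FinsetLemmas

variable {α : Type*} [DecidableEq α]

lemma erase_subset_of_card_le_card_inter_add_one {T A : Finset α} {s : α} (hsT : s ∈ T)
    (hsA : s ∉ A) (h : T.card ≤ (T ∩ A).card + 1) : T.erase s ⊆ A := by
  have hsub : T ∩ A ⊆ T.erase s := fun x hx =>
    mem_erase.mpr ⟨fun hxs => hsA (hxs ▸ (mem_inter.mp hx).2), (mem_inter.mp hx).1⟩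
  have heq := eq_of_subset_of_card_le hsub (by rw [card_erase_of_mem hsT]; omega)
  exact heq ▸ inter_subset_right

lemma card_insert_inter_le (a : α) (S A : Finset α) :
    (insert a S ∩ A).card ≤ (S ∩ A).card + 1 := by
  by_cases ha : a ∈ A
  · rw [insert_inter_of_mem ha]; exact card_insert_le _ _
  · rw [insert_inter_of_notMem ha]; omega

lemma card_erase_union_of_disjoint {S E : Finset α} {s : α} (hs : s ∈ S) (hSE : Disjoint S E) :
    (S.erase s ∪ E).card = S.card - 1 + E.card := by
  rw [card_union_of_disjoint (disjoint_of_subset_left (erase_subset _ _) hSE), card_erase_of_mem hs]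

lemma exists_mem_sdiff_of_card_inter_inter_lt {t : ℕ} {A B C : Finset α}
    (h : t ≤ (A ∩ B).card) (hC : (A ∩ B ∩ C).card < t) : ∃ x ∈ A, x ∈ B \ C := by
  by_contra! hA
  have : A ∩ B ⊆ A ∩ B ∩ C := fun x hx => by
    obtain ⟨hxA, hxB⟩ := mem_inter.mp hx
    exact mem_inter.mpr ⟨hx, by_contra fun hxC => hA x hxA (mem_sdiff.mpr ⟨hxB, hxC⟩)⟩
  exact absurd (card_le_card this) (by omega)

lemma insert_mem_of_mem_sup_sdiff {𝒯 : Finset (Finset α)} {S : Finset α} {e : α}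
    (h𝒯 : ∀ T ∈ 𝒯, S ⊆ T ∧ T.card = S.card + 1) (he : e ∈ 𝒯.sup id \ S) : insert e S ∈ 𝒯 := by
  obtain ⟨heU, heS⟩ := mem_sdiff.mp he
  obtain ⟨T, hT, heT⟩ := mem_sup.mp heU
  have := eq_of_subset_of_card_le (insert_subset heT (h𝒯 T hT).1)
    (by rw [id, (h𝒯 T hT).2, card_insert_of_notMem heS])
  rwa [this]

end FinsetLemmas

section Covers

variable {n r k t : ℕ} {F : Finset (Finset (ℕ × ℕ))} {S E : Finset (ℕ × ℕ)}

lemma erase_union_subset_of_notMem (hS : S.card = t) (hSE : Disjoint S E) (hE : E.Nonempty)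
    (hcov : ∀ e ∈ E, IsTCover n k t F (insert e S)) {A : Finset (ℕ × ℕ)} (hA : A ∈ F)
    {s : ℕ × ℕ} (hs : s ∈ S) (hsA : s ∉ A) : S.erase s ∪ E ⊆ A := by
  have key : ∀ e ∈ E, insert e (S.erase s) ⊆ A := fun e he => by
    have heS : e ∉ S := disjoint_right.mp hSE he
    rw [← erase_insert_of_ne fun (h : e = s) => heS (h ▸ hs)]
    refine erase_subset_of_card_le_card_inter_add_one (mem_insert_of_mem hs) hsA ?_
    rw [card_insert_of_notMem heS, hS]
    exact Nat.add_le_add_right ((hcov e he).2 A hA) 1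
  obtain ⟨e₀, he₀⟩ := hE
  exact union_subset ((subset_insert _ _).trans (key e₀ he₀))
    fun e he => key e he (mem_insert_self _ _)

/-- Some `A₁ ∈ F` meets `insert x S` in fewer than `t` points, so every member of `F` containing
`insert x S` meets `A₁ \ insert x S`. -/
lemma exists_transversal (hFL : F ⊆ L n r k) (hFint : IsTIntersecting t F)
    (hFS : ∀ A ∈ F, t ≤ (S ∩ A).card + 1) {x : ℕ × ℕ} (hx : ¬ IsTCover n k t F (insert x S)) :
    ∃ Y : Finset (ℕ × ℕ), Y.card ≤ r - t + 1 ∧ Disjoint Y (insert x S) ∧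
      ∀ A ∈ F, insert x S ⊆ A → ∃ y ∈ Y, y ∈ A := by
  by_cases hxS : ∃ A ∈ F, insert x S ⊆ A
  swap
  · exact ⟨∅, by simp, disjoint_empty_left _, fun A hA hxA => absurd ⟨A, hA, hxA⟩ hxS⟩
  obtain ⟨A', hA', hxA'⟩ := hxS
  obtain ⟨A₁, hA₁, hlt⟩ : ∃ A₁ ∈ F, (insert x S ∩ A₁).card < t := by
    by_contra! h
    exact hx ⟨isSigned_of_subset_mem_L (hFL hA') hxA', h⟩
  refine ⟨A₁ \ insert x S, ?_, sdiff_disjoint, fun A hA hxA => ?_⟩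
  · have hsplit := card_sdiff_add_card_inter A₁ (insert x S)
    have hS₁ : (S ∩ A₁).card ≤ (A₁ ∩ insert x S).card :=
      card_le_card fun y hy => by simp only [mem_inter, mem_insert] at hy ⊢; tauto
    have hA₁r : A₁.card = r := (mem_filter.mp (hFL hA₁)).2.1
    have := hFS A₁ hA₁
    omega
  · have hsmall : A ∩ A₁ ∩ insert x S ⊆ insert x S ∩ A₁ := fun y hy => by
      simp only [mem_inter] at hy ⊢; tauto
    obtain ⟨y, hyA, hy⟩ := exists_mem_sdiff_of_card_inter_inter_lt (hFint A hA A₁ hA₁)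
      ((card_le_card hsmall).trans_lt hlt)
    exact ⟨y, hy, hyA⟩

lemma exists_subset_of_mem (hFint : IsTIntersecting t F) (hS : S.card = t)
    (hSE : Disjoint S E) (hE : E.Nonempty) (hcov : ∀ e ∈ E, IsTCover n k t F (insert e S))
    {A₀ : Finset (ℕ × ℕ)} (hA₀ : A₀ ∈ F) {s₀ : ℕ × ℕ} (hs₀ : s₀ ∈ S) (hs₀A₀ : s₀ ∉ A₀)
    {Y : ℕ × ℕ → Finset (ℕ × ℕ)}
    (hY : ∀ x ∈ A₀ \ (S ∪ E), ∀ A ∈ F, insert x S ⊆ A → ∃ y ∈ Y x, y ∈ A)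
    {A : Finset (ℕ × ℕ)} (hA : A ∈ F) :
    (∃ e ∈ E, insert e S ⊆ A) ∨ (∃ s ∈ S, S.erase s ∪ E ⊆ A) ∨
      ∃ x ∈ A₀ \ (S ∪ E), ∃ y ∈ Y x, insert y (insert x S) ⊆ A := by
  by_cases hSA : S ⊆ A
  swap
  · obtain ⟨s, hs, hsA⟩ := not_subset.mp hSA
    exact Or.inr (Or.inl ⟨s, hs, erase_union_subset_of_notMem hS hSE hE hcov hA hs hsA⟩)
  by_cases hEA : ∃ e ∈ E, e ∈ A
  · obtain ⟨e, he, heA⟩ := hEA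
    exact Or.inl ⟨e, he, insert_subset heA hSA⟩
  push Not at hEA
  have hsmall : A ∩ A₀ ∩ (S ∪ E) ⊆ S.erase s₀ := fun z hz => by
    simp only [mem_inter, mem_union] at hz
    obtain ⟨⟨hzA, hzA₀⟩, hzS | hzE⟩ := hz
    · exact mem_erase.mpr ⟨fun h => hs₀A₀ (h ▸ hzA₀), hzS⟩
    · exact absurd hzA (hEA z hzE)
  have ht : 0 < t := hS ▸ card_pos.mpr ⟨s₀, hs₀⟩
  obtain ⟨x, hxA, hxX⟩ := exists_mem_sdiff_of_card_inter_inter_lt (hFint A hA A₀ hA₀)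
    ((card_le_card hsmall).trans_lt (by rw [card_erase_of_mem hs₀, hS]; omega))
  obtain ⟨y, hy, hyA⟩ := hY x hxX A hA (insert_subset hxA hSA)
  exact Or.inr (Or.inr ⟨x, hxX, y, hy, insert_subset hyA (insert_subset hxA hSA)⟩)

lemma card_sdiff_union_add_card_add_le (hFL : F ⊆ L n r k) (hS : S.card = t)
    (hSE : Disjoint S E) (hE : E.Nonempty) (hcov : ∀ e ∈ E, IsTCover n k t F (insert e S))
    {A₀ : Finset (ℕ × ℕ)} (hA₀ : A₀ ∈ F) {s₀ : ℕ × ℕ} (hs₀ : s₀ ∈ S) (hs₀A₀ : s₀ ∉ A₀) :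
    (A₀ \ (S ∪ E)).card + E.card + t ≤ r + 1 := by
  have hsub := erase_union_subset_of_notMem hS hSE hE hcov hA₀ hs₀ hs₀A₀
  have hA₀r : A₀.card = r := (mem_filter.mp (hFL hA₀)).2.1
  have ht : 0 < t := hS ▸ card_pos.mpr ⟨s₀, hs₀⟩
  have hsplit := card_sdiff_add_card_eq_card hsub
  rw [card_erase_union_of_disjoint hs₀ hSE, hA₀r, hS] at hsplit
  have := card_le_card (sdiff_subset_sdiff (le_refl A₀)
    (union_subset_union (erase_subset s₀ S) (le_refl E)))
  omega

end Covers

section TauSet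

variable {n k t : ℕ} {F : Finset (Finset (ℕ × ℕ))} {S : Finset (ℕ × ℕ)}

lemma subset_and_card_eq_of_mem_tauSet (hS : IsTCover n k t (TauSet n k t F) S)
    (hSt : S.card = t) {T : Finset (ℕ × ℕ)} (hT : T ∈ TauSet n k t F) :
    S ⊆ T ∧ T.card = S.card + 1 :=
  ⟨inter_eq_left.mp (eq_of_subset_of_card_le inter_subset_left (hSt ▸ hS.2 T hT)),
    hSt ▸ (mem_filter.mp hT).2.2⟩

lemma not_isTCover_insert_of_notMem_sup (hSt : S.card = t) {x : ℕ × ℕ} (hxS : x ∉ S)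
    (hxU : x ∉ (TauSet n k t F).sup id) : ¬ IsTCover n k t F (insert x S) := fun hcov =>
  hxU <| le_sup (f := id) (mem_filter.mpr ⟨mem_powerset.mpr hcov.1.1, hcov,
    by rw [card_insert_of_notMem hxS, hSt]⟩) (mem_insert_self x S)

end TauSet

lemma card_le_of_insert_isTCover {n r k t : ℕ} {F : Finset (Finset (ℕ × ℕ))}
    {S E A₀ : Finset (ℕ × ℕ)} {s₀ : ℕ × ℕ} (hFL : F ⊆ L n r k) (hFint : IsTIntersecting t F)
    (hS : S.card = t) (hSE : Disjoint S E) (hE : 3 ≤ E.card)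
    (hcov : ∀ e ∈ E, IsTCover n k t F (insert e S))
    (hnot : ∀ x ∉ S ∪ E, ¬ IsTCover n k t F (insert x S))
    (hA₀ : A₀ ∈ F) (hs₀ : s₀ ∈ S) (hs₀A₀ : s₀ ∉ A₀) :
    F.card ≤ E.card * ((n - (t + 1)).choose (r - (t + 1)) * k ^ (r - (t + 1))) +
      (t + (A₀ \ (S ∪ E)).card * (r - t + 1)) *
        ((n - (t + 2)).choose (r - (t + 2)) * k ^ (r - (t + 2))) := by
  set X := A₀ \ (S ∪ E)
  have hEne : E.Nonempty := card_pos.mp (by omega)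
  have hFS : ∀ A ∈ F, t ≤ (S ∩ A).card + 1 := fun A hA =>
    ((hcov _ hEne.choose_spec).2 A hA).trans (card_insert_inter_le _ S A)
  choose! Y hYcard hYdisj hYmeet using fun x (hx : x ∈ X) =>
    exists_transversal hFL hFint hFS (hnot x (mem_sdiff.mp hx).2)
  obtain ⟨E₃, hE₃E, hE₃⟩ := exists_subset_card_eq hE
  have ht : ∀ s ∈ S, 1 ≤ t := fun s hs => hS ▸ card_pos.mpr ⟨s, hs⟩
  have hcover : F ⊆ ((L n r k).filter fun A => ∃ e ∈ E, insert e S ⊆ A) ∪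
      (((L n r k).filter fun A => ∃ s ∈ S, S.erase s ∪ E₃ ⊆ A) ∪
        (L n r k).filter fun A => ∃ p ∈ X.sigma Y, insert p.2 (insert p.1 S) ⊆ A) := by
    intro A hA
    simp only [mem_union, mem_filter, hFL hA, true_and]
    rcases exists_subset_of_mem hFint hS hSE hEne hcov hA₀ hs₀ hs₀A₀ hYmeet hA with
      h | ⟨s, hs, hsA⟩ | ⟨x, hx, y, hy, hxyA⟩
    · exact Or.inl h
    · exact Or.inr (Or.inl ⟨s, hs, (union_subset_union_right hE₃E).trans hsA⟩)
    · exact Or.inr (Or.inr ⟨⟨x, y⟩, mem_sigma.mpr ⟨hx, hy⟩, hxyA⟩)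
  have h₁ := card_filter_exists_subset_le n r k (t + 1) E (insert · S) fun e he => by
    rw [card_insert_of_notMem (disjoint_right.mp hSE he), hS]
  have h₂ := card_filter_exists_subset_le n r k (t + 2) S (S.erase · ∪ E₃) fun s hs => by
    rw [card_erase_union_of_disjoint hs (disjoint_of_subset_right hE₃E hSE), hS, hE₃]
    have := ht s hs
    omega
  have h₃ := card_filter_exists_subset_le n r k (t + 2) (X.sigma Y)
    (fun p => insert p.2 (insert p.1 S)) fun p hp => by
      obtain ⟨hx, hy⟩ := mem_sigma.mp hp
      have hxS : p.1 ∉ S := fun h => (mem_sdiff.mp hx).2 (mem_union_left _ h)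
      rw [card_insert_of_notMem (disjoint_left.mp (hYdisj _ hx) hy),
        card_insert_of_notMem hxS, hS]
  have hXY : (X.sigma Y).card ≤ X.card * (r - t + 1) := by
    rw [card_sigma]
    exact sum_le_card_nsmul _ _ _ hYcard
  calc F.card ≤ _ := (card_le_card hcover).trans <|
        (card_union_le _ _).trans (Nat.add_le_add_left (card_union_le _ _) _)
    _ ≤ E.card * ((n - (t + 1)).choose (r - (t + 1)) * k ^ (r - (t + 1))) +
        (S.card * ((n - (t + 2)).choose (r - (t + 2)) * k ^ (r - (t + 2))) +
          (X.sigma Y).card * ((n - (t + 2)).choose (r - (t + 2)) * k ^ (r - (t + 2)))) := by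
      gcongr
    _ ≤ _ := by
      rw [hS, add_mul t]
      gcongr

theorem bound_ell_large_general (n r k t l : ℕ)
    (F : Finset (Finset (ℕ × ℕ))) (hF : IsMaximalTIntersecting n r k t F)
    (hmin : ∀ T, IsTCover n k t F T → t + 1 ≤ T.card)
    (hS : ∃ S, IsTCover n k t (TauSet n k t F) S ∧ S.card = t)
    (hl : ((TauSet n k t F).sup id).card = l) (hl3 : t + 3 ≤ l) :
    F.card ≤ (l - t) * (n - t - 1).choose (r - t - 1) * k ^ (r - t - 1) +
      ((r - l + 1) * (r - t + 1) + t) * (n - t - 2).choose (r - t - 2) * k ^ (r - t - 2) := by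
  obtain ⟨S, hScov, hScard⟩ := hS
  obtain ⟨hFL, hFint, -⟩ := hF
  have hST : ∀ T ∈ TauSet n k t F, S ⊆ T ∧ T.card = S.card + 1 := fun _ =>
    subset_and_card_eq_of_mem_tauSet hScov hScard
  obtain ⟨x, hx⟩ : ((TauSet n k t F).sup id).Nonempty := card_pos.mp (by omega)
  obtain ⟨T, hT, -⟩ := mem_sup.mp hx
  have hE : ((TauSet n k t F).sup id \ S).card = l - t := by
    rw [card_sdiff_of_subset ((hST T hT).1.trans (le_sup (f := id) hT)), hl, hScard]
  have hcov : ∀ e ∈ (TauSet n k t F).sup id \ S, IsTCover n k t F (insert e S) := fun e he =>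
    (mem_filter.mp (insert_mem_of_mem_sup_sdiff hST he)).2.1
  have hnot : ∀ x ∉ S ∪ (TauSet n k t F).sup id \ S, ¬ IsTCover n k t F (insert x S) :=
    fun x hx => by
      rw [union_sdiff_self_eq_union, mem_union, not_or] at hx
      exact not_isTCover_insert_of_notMem_sup hScard hx.1 hx.2
  have hSE : Disjoint S ((TauSet n k t F).sup id \ S) := disjoint_sdiff
  generalize (TauSet n k t F).sup id \ S = E at hE hcov hnot hSE
  obtain ⟨A₀, hA₀, s₀, hs₀, hs₀A₀⟩ : ∃ A₀ ∈ F, ∃ s₀ ∈ S, s₀ ∉ A₀ := by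
    by_contra! h
    have := hmin S ⟨hScov.1, fun A hA => by rw [inter_eq_left.mpr (h A hA), hScard]⟩
    omega
  have hX := card_sdiff_union_add_card_add_le hFL hScard hSE (card_pos.mp (by omega)) hcov
    hA₀ hs₀ hs₀A₀
  calc F.card ≤ _ := card_le_of_insert_isTCover hFL hFint hScard hSE (by omega) hcov hnot
        hA₀ hs₀ hs₀A₀
    _ ≤ (l - t) * ((n - (t + 1)).choose (r - (t + 1)) * k ^ (r - (t + 1))) +
        (t + (r - l + 1) * (r - t + 1)) *
          ((n - (t + 2)).choose (r - (t + 2)) * k ^ (r - (t + 2))) := by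
      rw [hE]
      gcongr
      omega
    _ = _ := by
      simp only [Nat.sub_sub]
      ring

theorem bound_ell_large (n r k t l : ℕ) (hn : 0 < n) (ht : 0 < t)
    (hk : 2 ≤ k) (htr : t + 1 ≤ r) (hrn : r ≤ n)
    (F : Finset (Finset (ℕ × ℕ))) (hF : IsMaximalTIntersecting n r k t F)
    (hex : ∃ T, IsTCover n k t F T ∧ T.card = t + 1)
    (hmin : ∀ T, IsTCover n k t F T → t + 1 ≤ T.card)
    (hcard : 2 ≤ (TauSet n k t F).card)
    (hS : ∃ S, IsTCover n k t (TauSet n k t F) S ∧ S.card = t)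
    (hl : ((TauSet n k t F).sup id).card = l) (hl3 : t + 3 ≤ l) :
    F.card ≤ (l - t) * (n - t - 1).choose (r - t - 1) * k ^ (r - t - 1) +
      ((r - l + 1) * (r - t + 1) + t) * (n - t - 2).choose (r - t - 2) * k ^ (r - t - 2) :=
  bound_ell_large_general n r k t l F hF hmin hS hl hl3
end

section
/- Let $n,r,k,t$ be positive integers with $n\ge t+2$, $n\ge r\ge t+1$ and $k\ge\max\{2,g(n,r,t)\}$, where $g(n,r,t)=\frac{(r-t+3)(r-t-1)}{n-t-1}\max\{\binom{t+2}{2},\frac{r-t+1}{2}\}$. Suppose $\mathcal{F}\subset\mathcal{L}_{n,r,k}$ is a maximal non-trivial $t$-intersecting family with $\tau_t(\mathcal{F})\ge t+2$. Then $|\mathcal{F}|\le(r-t+1)^2\binom{t+2}{2}\binom{n-t-2}{r-t-2}k^{r-t-2}$. -/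
open Finset

attribute [local instance] Classical.propDecidable

lemma signed_subset {n k : ℕ} {A B : Finset (ℕ × ℕ)} (hA : IsSigned n k A) (hBA : B ⊆ A) :
    IsSigned n k B := by
  refine ⟨hBA.trans hA.1, ?_⟩
  have hinj : Set.InjOn Prod.fst (A : Set (ℕ × ℕ)) := Finset.card_image_iff.mp hA.2
  exact Finset.card_image_of_injOn (hinj.mono (Finset.coe_subset.mpr hBA))

lemma mem_L_spec (n r k : ℕ) {A : Finset (ℕ × ℕ)} (h : A ∈ L n r k) :
    A ⊆ box n k ∧ A.card = r ∧ (A.image Prod.fst).card = r := by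
  unfold L at h
  rw [Finset.mem_filter, Finset.mem_powerset] at h
  exact ⟨h.1, h.2.1, h.2.2⟩

lemma signed_of_mem_L {n r k : ℕ} {A : Finset (ℕ × ℕ)} (h : A ∈ L n r k) :
    IsSigned n k A := by
  obtain ⟨h1, h2, h3⟩ := mem_L_spec n r k h
  exact ⟨h1, by rw [h3, h2]⟩

lemma choose_add_le_pow (s q : ℕ) : (s + q).choose q ≤ (s + 1) ^ q := by
  induction q with
  | zero => simp
  | succ q ih =>
    have h := Nat.add_one_mul_choose_eq (s + q) q
    -- (s+q+1) * (s+q).choose q = (s+q+1).choose (q+1) * (q+1)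
    refine Nat.le_of_mul_le_mul_right ?_ (show 0 < q + 1 by omega)
    have e1 : s + (q + 1) = (s + q) + 1 := by omega
    rw [e1]
    calc ((s+q)+1).choose (q+1) * (q+1) = (s+q).succ * (s+q).choose q := by
          rw [← h]
      _ ≤ (s + q + 1) * (s + 1) ^ q := by
          exact Nat.mul_le_mul_left _ ih
      _ ≤ ((q+1) * (s+1)) * (s+1)^q := by
          apply Nat.mul_le_mul_right
          nlinarith
      _ = (s+1)^(q+1) * (q+1) := by ring

lemma cross_ineq {n r y t : ℕ} (h1 : t + 1 ≤ y) (h2 : y + 1 ≤ r) (h3 : r ≤ n) :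
    (r - y) * (n - t - 1) ≤ (n - y) * (r - t - 1) := by
  obtain ⟨b, rfl⟩ : ∃ b, r = y + b := ⟨r - y, by omega⟩
  obtain ⟨c, rfl⟩ : ∃ c, n = y + b + c := ⟨n - (y + b), by omega⟩
  obtain ⟨e, rfl⟩ : ∃ e, y = t + 1 + e := ⟨y - (t + 1), by omega⟩
  rw [show t + 1 + e + b - (t + 1 + e) = b from by omega,
      show t + 1 + e + b + c - t - 1 = e + b + c from by omega,
      show t + 1 + e + b + c - (t + 1 + e) = b + c from by omega,
      show t + 1 + e + b - t - 1 = e + b from by omega]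
  nlinarith
lemma graph_eval {S : Finset (ℕ × ℕ)} (hinj : (S.image Prod.fst).card = S.card)
    {p : ℕ × ℕ} (hp : p ∈ S) : (S.filter (fun x => x.1 = p.1)).sup Prod.snd = p.2 := by
  have hInj : Set.InjOn Prod.fst (S : Set (ℕ × ℕ)) := Finset.card_image_iff.mp hinj
  have hs : S.filter (fun x => x.1 = p.1) = {p} := by
    apply Finset.ext; intro x
    simp only [Finset.mem_filter, Finset.mem_singleton]
    constructor
    · rintro ⟨hx, he⟩; exact hInj hx hp he
    · rintro rfl; exact ⟨hp, rfl⟩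
  rw [hs, Finset.sup_singleton]

lemma count_signed (U V : Finset ℕ) (j : ℕ) :
    (((U ×ˢ V).powerset).filter (fun S => S.card = j ∧ (S.image Prod.fst).card = j)).card
      ≤ U.card.choose j * V.card ^ j := by
  classical
  set D := ((U ×ˢ V).powerset).filter
      (fun S => S.card = j ∧ (S.image Prod.fst).card = j) with hD
  have hDmem : ∀ {S}, S ∈ D → S ⊆ U ×ˢ V ∧ S.card = j ∧ (S.image Prod.fst).card = j := by
    intro S hS
    rw [hD, Finset.mem_filter, Finset.mem_powerset] at hS
    exact ⟨hS.1, hS.2.1, hS.2.2⟩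
  have hmap : ∀ S ∈ D, S.image Prod.fst ∈ U.powersetCard j := by
    intro S hS
    obtain ⟨h1, h2, h3⟩ := hDmem hS
    refine Finset.mem_powersetCard.mpr ⟨?_, h3⟩
    intro a ha
    obtain ⟨p, hp, rfl⟩ := Finset.mem_image.mp ha
    exact (Finset.mem_product.mp (h1 hp)).1
  rw [Finset.card_eq_sum_card_fiberwise hmap]
  have hfib : ∀ W ∈ U.powersetCard j,
      (D.filter (fun S => S.image Prod.fst = W)).card ≤ V.card ^ j := by
    intro W hW
    have hWcard : W.card = j := (Finset.mem_powersetCard.mp hW).2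
    have hle := Finset.card_le_card_of_injOn
      (s := D.filter (fun S => S.image Prod.fst = W)) (t := W.pi (fun _ => V))
      (fun S => fun a (_ : a ∈ W) => (S.filter (fun x => x.1 = a)).sup Prod.snd)
      ?_ ?_
    · calc (D.filter (fun S => S.image Prod.fst = W)).card
          ≤ (W.pi (fun _ => V)).card := hle
        _ = ∏ _a ∈ W, V.card := Finset.card_pi _ _
        _ = V.card ^ j := by rw [Finset.prod_const, hWcard]
    · -- maps to
      intro S hS
      obtain ⟨hSD, hSW⟩ := Finset.mem_filter.mp hS
      obtain ⟨h1, h2, h3⟩ := hDmem hSD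
      refine Finset.mem_pi.mpr ?_
      intro a ha
      rw [← hSW] at ha
      obtain ⟨p, hp, rfl⟩ := Finset.mem_image.mp ha
      show (S.filter (fun x => x.1 = p.1)).sup Prod.snd ∈ V
      rw [graph_eval (by rw [h3, h2]) hp]
      exact (Finset.mem_product.mp (h1 hp)).2
    · -- injOn
      have key : ∀ S1 ∈ D.filter (fun S => S.image Prod.fst = W),
          ∀ S2 ∈ D.filter (fun S => S.image Prod.fst = W),
          ((fun S => fun a (_ : a ∈ W) => (S.filter (fun x => x.1 = a)).sup Prod.snd) S1
            = (fun S => fun a (_ : a ∈ W) => (S.filter (fun x => x.1 = a)).sup Prod.snd) S2)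
          → S1 ⊆ S2 := by
        intro S1 h1' S2 h2' heq p hp
        obtain ⟨h1D, h1W⟩ := Finset.mem_filter.mp h1'
        obtain ⟨h2D, h2W⟩ := Finset.mem_filter.mp h2'
        obtain ⟨g1, g2, g3⟩ := hDmem h1D
        obtain ⟨f1, f2, f3⟩ := hDmem h2D
        have hpW : p.1 ∈ W := by rw [← h1W]; exact Finset.mem_image_of_mem _ hp
        have he1 : (S1.filter (fun x => x.1 = p.1)).sup Prod.snd = p.2 :=
          graph_eval (by rw [g3, g2]) hp
        have he2 : (S2.filter (fun x => x.1 = p.1)).sup Prod.snd = p.2 := by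
          have := congrFun (congrFun heq p.1) hpW
          simp only at this
          rw [← this, he1]
        have hpW2 : p.1 ∈ S2.image Prod.fst := by rw [h2W]; exact hpW
        obtain ⟨p', hp', hpe⟩ := Finset.mem_image.mp hpW2
        have he3 : (S2.filter (fun x => x.1 = p'.1)).sup Prod.snd = p'.2 :=
          graph_eval (by rw [f3, f2]) hp'
        rw [hpe] at he3
        have : p' = p := by
          have h4 : p'.2 = p.2 := by rw [← he3, he2]
          exact Prod.ext hpe h4
        rwa [← this]
      intro S1 h1' S2 h2' heq
      exact Finset.Subset.antisymm (key S1 h1' S2 h2' heq) (key S2 h2' S1 h1' heq.symm)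
  calc ∑ W ∈ U.powersetCard j, (D.filter (fun S => S.image Prod.fst = W)).card
      ≤ ∑ _W ∈ U.powersetCard j, V.card ^ j := Finset.sum_le_sum hfib
    _ = (U.powersetCard j).card * V.card ^ j := by rw [Finset.sum_const, smul_eq_mul]
    _ = U.card.choose j * V.card ^ j := by rw [Finset.card_powersetCard]
lemma leaf_count (n r k : ℕ) (P : Finset (ℕ × ℕ)) (hP : IsSigned n k P) :
    ((L n r k).filter (fun F => P ⊆ F)).card
      ≤ (n - P.card).choose (r - P.card) * k ^ (r - P.card) := by
  classical
  by_cases hpr : P.card ≤ r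
  case neg =>
    have hempty : (L n r k).filter (fun F => P ⊆ F) = ∅ := by
      rw [Finset.filter_eq_empty_iff]
      intro A hA hPA
      have hcard := (mem_L_spec n r k hA).2.1
      exact hpr (hcard ▸ Finset.card_le_card hPA)
    simp [hempty]
  case pos =>
    set U := Finset.Icc 1 n \ P.image Prod.fst with hU
    have hPim : P.image Prod.fst ⊆ Finset.Icc 1 n := by
      intro a ha
      obtain ⟨p, hp, rfl⟩ := Finset.mem_image.mp ha
      have := hP.1 hp
      unfold _root_.box at this
      exact (Finset.mem_product.mp this).1
    have hUcard : U.card = n - P.card := by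
      rw [hU, Finset.card_sdiff_of_subset hPim, Nat.card_Icc, hP.2]
      omega
    have hVcard : (Finset.Icc 1 k).card = k := by rw [Nat.card_Icc]; omega
    have hstep : ((L n r k).filter (fun F => P ⊆ F)).card ≤
        (((U ×ˢ Finset.Icc 1 k).powerset).filter
          (fun S => S.card = r - P.card ∧ (S.image Prod.fst).card = r - P.card)).card := by
      apply Finset.card_le_card_of_injOn (fun A => A \ P)
      · intro A hA
        obtain ⟨hAL, hPA⟩ := Finset.mem_filter.mp hA
        obtain ⟨hAb, hAc, hAi⟩ := mem_L_spec n r k hAL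
        have hAsig : IsSigned n k A := signed_of_mem_L hAL
        have hAinj : Set.InjOn Prod.fst (A : Set (ℕ × ℕ)) :=
          Finset.card_image_iff.mp hAsig.2
        refine Finset.mem_filter.mpr ⟨Finset.mem_powerset.mpr ?_, ?_, ?_⟩
        · intro p hp
          obtain ⟨hpA, hpP⟩ := Finset.mem_sdiff.mp hp
          have hpbox := hAb hpA
          unfold _root_.box at hpbox
          have hp1 := (Finset.mem_product.mp hpbox).1
          have hp2 := (Finset.mem_product.mp hpbox).2
          refine Finset.mem_product.mpr ⟨Finset.mem_sdiff.mpr ⟨hp1, ?_⟩, hp2⟩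
          intro hcon
          obtain ⟨p0, hp0P, hp0e⟩ := Finset.mem_image.mp hcon
          exact hpP (hAinj (hPA hp0P) hpA hp0e ▸ hp0P)
        · rw [Finset.card_sdiff_of_subset hPA, hAc]
        · have := signed_subset hAsig (Finset.sdiff_subset (s := A) (t := P))
          rw [this.2, Finset.card_sdiff_of_subset hPA, hAc]
      · intro A1 h1 A2 h2 he
        have h1' := (Finset.mem_filter.mp h1).2
        have h2' := (Finset.mem_filter.mp h2).2
        calc A1 = (A1 \ P) ∪ P := (Finset.sdiff_union_of_subset h1').symm
          _ = (A2 \ P) ∪ P := by rw [show A1 \ P = A2 \ P from he]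
          _ = A2 := Finset.sdiff_union_of_subset h2'
    calc ((L n r k).filter (fun F => P ⊆ F)).card
        ≤ _ := hstep
      _ ≤ U.card.choose (r - P.card) * (Finset.Icc 1 k).card ^ (r - P.card) :=
          count_signed U (Finset.Icc 1 k) (r - P.card)
      _ = (n - P.card).choose (r - P.card) * k ^ (r - P.card) := by rw [hUcard, hVcard]
def ggF (n r k p : ℕ) : ℕ := (n - p).choose (r - p) * k ^ (r - p)

lemma ggF_def (n r k p : ℕ) : ggF n r k p = (n - p).choose (r - p) * k ^ (r - p) := rfl

lemma gg_id (n r y : ℕ) (hyn : y + 1 ≤ n) (hyr : y + 1 ≤ r) :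
    (n - y) * ((n - (y+1)).choose (r - (y+1))) = (r - y) * ((n - y).choose (r - y)) := by
  have h := Nat.add_one_mul_choose_eq (n - y - 1) (r - y - 1)
  rw [show n - (y+1) = n - y - 1 from by omega, show r - (y+1) = r - y - 1 from by omega]
  rw [show n - y - 1 + 1 = n - y from by omega, show r - y - 1 + 1 = r - y from by omega] at h
  rw [h]
  apply mul_comm

lemma gg_single (n r k t y : ℕ) (hyn : y + 1 ≤ n) (hyr : y + 1 ≤ r)
    (h1 : (r-t+1) * (r-y) ≤ k * (n-y)) :
    (r-t+1) * ggF n r k (y+1) ≤ ggF n r k y := by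
  have hid := gg_id n r y hyn hyr
  refine Nat.le_of_mul_le_mul_left ?_ (show 0 < n - y by omega)
  calc (n-y) * ((r-t+1) * ggF n r k (y+1))
      = (r-t+1) * (((n-y) * ((n-(y+1)).choose (r-(y+1)))) * k^(r-(y+1))) := by
        rw [ggF_def]; ring
    _ = (r-t+1) * (((r-y) * ((n-y).choose (r-y))) * k^(r-(y+1))) := by rw [hid]
    _ = ((r-t+1) * (r-y)) * (((n-y).choose (r-y)) * k^(r-(y+1))) := by ring
    _ ≤ (k * (n-y)) * (((n-y).choose (r-y)) * k^(r-(y+1))) := mul_le_mul_left h1 _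
    _ = (n-y) * (((n-y).choose (r-y)) * (k^(r-(y+1)) * k)) := by ring
    _ = (n-y) * ggF n r k y := by
        rw [ggF_def, show r - y = (r-(y+1)) + 1 from by omega, pow_succ]

lemma gg_chain (n r k t : ℕ) (hrn : r ≤ n)
    (hS1 : ∀ y, t + 2 ≤ y → y + 1 ≤ r → (r-t+1) * (r-y) ≤ k * (n-y)) :
    ∀ i y, t + 2 ≤ y → y + i ≤ r → (r-t+1)^i * ggF n r k (y+i) ≤ ggF n r k y := by
  intro i
  induction i with
  | zero => intro y _ _; simp
  | succ i ih =>
    intro y hy hyr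
    have h1 : (r-t+1) * ggF n r k (y+i+1) ≤ ggF n r k (y+i) :=
      gg_single n r k t (y+i) (by omega) (by omega) (hS1 (y+i) (by omega) (by omega))
    calc (r-t+1)^(i+1) * ggF n r k (y+(i+1))
        = (r-t+1)^i * ((r-t+1) * ggF n r k (y+i+1)) := by
          rw [pow_succ, show y + (i+1) = y + i + 1 from by omega]; ring
      _ ≤ (r-t+1)^i * ggF n r k (y+i) := mul_le_mul_right h1 _
      _ ≤ ggF n r k y := ih y hy (by omega)

lemma gg_final (n r k t : ℕ) (hrn : r ≤ n)
    (hS2 : ∀ y, t + 2 ≤ y → y + 1 ≤ r →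
      (y+1) * ((r-t+1) * (r-y)) ≤ (y+1-t) * (k * (n-y))) :
    ∀ j, 2 ≤ j → t + j ≤ r →
      ((t+j).choose t) * ((r-t+1)^j * ggF n r k (t+j))
        ≤ ((t+2).choose 2) * ((r-t+1)^2 * ggF n r k (t+2)) := by
  intro j
  induction j with
  | zero => intro h _; exact absurd h (by omega)
  | succ j ihj =>
    intro hj2 hjr
    by_cases hj : 2 ≤ j
    case neg =>
      have hj1 : j = 1 := by omega
      subst hj1
      have hcs : (t+(1+1)).choose t = (t+2).choose 2 := by
        rw [show t + (1+1) = t + 2 from by omega]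
        rw [← Nat.choose_symm (show 2 ≤ t+2 from by omega), show t+2-2 = t from by omega]
      rw [hcs, show t + (1+1) = t + 2 from by omega]
    case pos =>
      have hstep : ((t+(j+1)).choose t) * ((r-t+1)^(j+1) * ggF n r k (t+(j+1)))
          ≤ ((t+j).choose t) * ((r-t+1)^j * ggF n r k (t+j)) := by
        have hy2 : t + 2 ≤ t + j := by omega
        have hyr : (t+j) + 1 ≤ r := by omega
        have hyn : (t+j) + 1 ≤ n := by omega
        have hid := gg_id n r (t+j) hyn hyr
        have hch : ((t+j)+1-t) * (((t+j)+1).choose t) = ((t+j)+1) * ((t+j).choose t) := by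
          have h := Nat.choose_mul_succ_eq (t+j) t
          calc ((t+j)+1-t) * (((t+j)+1).choose t) = ((t+j)+1).choose t * ((t+j)+1-t) :=
                mul_comm _ _
            _ = (t+j).choose t * ((t+j)+1) := h.symm
            _ = ((t+j)+1) * ((t+j).choose t) := mul_comm _ _
        have hpos : 0 < (n - (t+j)) * ((t+j) + 1 - t) := by
          apply Nat.mul_pos <;> omega
        refine Nat.le_of_mul_le_mul_left ?_ hpos
        calc ((n-(t+j)) * ((t+j)+1-t))
              * (((t+(j+1)).choose t) * ((r-t+1)^(j+1) * ggF n r k (t+(j+1))))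
            = (((t+j)+1-t) * (((t+j)+1).choose t)) * ((r-t+1)^(j+1)
                * (((n-(t+j)) * ((n-((t+j)+1)).choose (r-((t+j)+1)))) * k^(r-((t+j)+1)))) := by
              rw [ggF_def, show t+(j+1) = (t+j)+1 from by omega]; ring
          _ = (((t+j)+1) * ((t+j).choose t)) * ((r-t+1)^(j+1)
                * (((r-(t+j)) * ((n-(t+j)).choose (r-(t+j)))) * k^(r-((t+j)+1)))) := by
              rw [hch, hid]
          _ = (((t+j)+1) * ((r-t+1) * (r-(t+j)))) * (((t+j).choose t) * ((r-t+1)^j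
                * (((n-(t+j)).choose (r-(t+j))) * k^(r-((t+j)+1))))) := by
              rw [pow_succ]; ring
          _ ≤ ((((t+j)+1)-t) * (k * (n-(t+j)))) * (((t+j).choose t) * ((r-t+1)^j
                * (((n-(t+j)).choose (r-(t+j))) * k^(r-((t+j)+1))))) := by
              apply mul_le_mul_left
              have := hS2 (t+j) hy2 hyr
              convert this using 2 <;> omega
          _ = ((n-(t+j)) * ((t+j)+1-t)) * (((t+j).choose t) * ((r-t+1)^j
                * (((n-(t+j)).choose (r-(t+j))) * (k^(r-((t+j)+1)) * k)))) := by ring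
          _ = ((n-(t+j)) * ((t+j)+1-t))
              * (((t+j).choose t) * ((r-t+1)^j * ggF n r k (t+j))) := by
              rw [ggF_def, show r - (t+j) = (r-((t+j)+1)) + 1 from by omega, pow_succ]
      exact hstep.trans (ihj hj (by omega))
lemma main_bound (n r k t τ : ℕ) (F : Finset (Finset (ℕ × ℕ)))
    (hFL : F ⊆ L n r k) (hint : IsTIntersecting t F)
    (hwit : ∀ P, IsSigned n k P → P.card < τ → ∃ A ∈ F, (P ∩ A).card < t)
    (hτt2 : t + 2 ≤ τ) (htr : t ≤ r) (hrn : r ≤ n)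
    (hchain : ∀ i y, t + 2 ≤ y → y + i ≤ r →
      (r-t+1)^i * ggF n r k (y+i) ≤ ggF n r k y) :
    ∀ d P, IsSigned n k P → P.card + d = τ →
      (F.filter (fun F' => P ⊆ F')).card ≤ (r-t+1)^d * ggF n r k τ := by
  classical
  intro d
  induction d using Nat.strong_induction_on with
  | _ d IH =>
  intro P hPsig hPd
  by_cases hd0 : d = 0
  · subst hd0
    have hle : F.filter (fun F' => P ⊆ F') ⊆ (L n r k).filter (fun F' => P ⊆ F') :=
      Finset.filter_subset_filter _ hFL
    have h := (Finset.card_le_card hle).trans (leaf_count n r k P hPsig)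
    rw [show P.card = τ from by omega] at h
    simpa [ggF_def] using h
  · -- step case
    obtain ⟨A, hAF, hm⟩ := hwit P hPsig (by omega)
    set m := (P ∩ A).card with hmdef
    set q := t - m with hqdef
    have hq1 : 1 ≤ q := by omega
    obtain ⟨hAbox, hAcard, hAimg⟩ := mem_L_spec n r k (hFL hAF)
    set cand := A.filter (fun a => a.1 ∉ P.image Prod.fst) with hcand
    have hcandcard : cand.card ≤ r - m := by
      have hPA : P ∩ A ⊆ A.filter (fun a => a.1 ∈ P.image Prod.fst) := by
        intro a ha
        rcases Finset.mem_inter.mp ha with ⟨haP, haA⟩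
        exact Finset.mem_filter.mpr ⟨haA, Finset.mem_image_of_mem _ haP⟩
      have h1 : m ≤ (A.filter (fun a => a.1 ∈ P.image Prod.fst)).card :=
        Finset.card_le_card hPA
      have h2 := Finset.card_filter_add_card_filter_not
        (s := A) (p := fun a => a.1 ∈ P.image Prod.fst)
      have e : A.filter (fun a => ¬ a.1 ∈ P.image Prod.fst) = cand := by
        ext a; simp [hcand]
      rw [hAcard, e] at h2
      omega
    have hcover : F.filter (fun F' => P ⊆ F') ⊆
        (cand.powersetCard q).biUnion (fun Q => F.filter (fun F' => P ∪ Q ⊆ F')) := by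
      intro F' hF'
      obtain ⟨hF'F, hPF'⟩ := Finset.mem_filter.mp hF'
      have hF'sig := signed_of_mem_L (hFL hF'F)
      have hF'inj : Set.InjOn Prod.fst (F' : Set (ℕ × ℕ)) :=
        Finset.card_image_iff.mp hF'sig.2
      have hsubint : F' ∩ A ⊆ (P ∩ A) ∪ (F' ∩ cand) := by
        intro a ha
        rcases Finset.mem_inter.mp ha with ⟨haF', haA⟩
        by_cases hc : a.1 ∈ P.image Prod.fst
        · obtain ⟨p₀, hp₀P, hp₀⟩ := Finset.mem_image.mp hc
          have he : p₀ = a := hF'inj (hPF' hp₀P) haF' hp₀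
          exact Finset.mem_union_left _ (Finset.mem_inter.mpr ⟨he ▸ hp₀P, haA⟩)
        · exact Finset.mem_union_right _
            (Finset.mem_inter.mpr ⟨haF', Finset.mem_filter.mpr ⟨haA, hc⟩⟩)
      have hc1 : t ≤ (F' ∩ A).card := hint F' hF'F A hAF
      have hc2 : (F' ∩ A).card ≤ m + (F' ∩ cand).card := by
        calc (F' ∩ A).card ≤ ((P ∩ A) ∪ (F' ∩ cand)).card := Finset.card_le_card hsubint
          _ ≤ (P ∩ A).card + (F' ∩ cand).card := Finset.card_union_le _ _
      have hqle : q ≤ (F' ∩ cand).card := by omega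
      obtain ⟨Q, hQsub, hQcard⟩ := Finset.exists_subset_card_eq hqle
      refine Finset.mem_biUnion.mpr ⟨Q, ?_, ?_⟩
      · exact Finset.mem_powersetCard.mpr
          ⟨hQsub.trans Finset.inter_subset_right, hQcard⟩
      · exact Finset.mem_filter.mpr
          ⟨hF'F, Finset.union_subset hPF' (hQsub.trans Finset.inter_subset_left)⟩
    have hstep1 : (F.filter (fun F' => P ⊆ F')).card ≤
        ∑ Q ∈ cand.powersetCard q, (F.filter (fun F' => P ∪ Q ⊆ F')).card :=
      (Finset.card_le_card hcover).trans Finset.card_biUnion_le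
    have hbranch : (cand.powersetCard q).card ≤ (r-t+1)^q := by
      rw [Finset.card_powersetCard]
      calc cand.card.choose q ≤ (r - m).choose q := Nat.choose_le_choose _ hcandcard
        _ = ((r-t) + q).choose q := by rw [show r - m = (r-t) + q from by omega]
        _ ≤ ((r-t) + 1)^q := choose_add_le_pow _ _
    have hQfacts : ∀ Q ∈ cand.powersetCard q, (P ∪ Q).card = P.card + q := by
      intro Q hQ
      obtain ⟨hQc, hQcard⟩ := Finset.mem_powersetCard.mp hQ
      have hdisj : Disjoint P Q := by
        rw [Finset.disjoint_right]
        intro a haQ haP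
        exact (Finset.mem_filter.mp (hQc haQ)).2 (Finset.mem_image_of_mem _ haP)
      rw [Finset.card_union_of_disjoint hdisj, hQcard]
    by_cases hqd : q ≤ d
    · -- within induction range
      have hterm : ∀ Q ∈ cand.powersetCard q,
          (F.filter (fun F' => P ∪ Q ⊆ F')).card ≤ (r-t+1)^(d-q) * ggF n r k τ := by
        intro Q hQ
        by_cases hz : (F.filter (fun F' => P ∪ Q ⊆ F')).card = 0
        · rw [hz]; exact Nat.zero_le _
        · obtain ⟨F', hF'⟩ := Finset.card_pos.mp (Nat.pos_of_ne_zero hz)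
          obtain ⟨hF'F, hPQ⟩ := Finset.mem_filter.mp hF'
          have hsigPQ : IsSigned n k (P ∪ Q) :=
            signed_subset (signed_of_mem_L (hFL hF'F)) hPQ
          exact IH (d - q) (by omega) (P ∪ Q) hsigPQ (by rw [hQfacts Q hQ]; omega)
      calc (F.filter (fun F' => P ⊆ F')).card
          ≤ ∑ Q ∈ cand.powersetCard q, (F.filter (fun F' => P ∪ Q ⊆ F')).card := hstep1
        _ ≤ (cand.powersetCard q).card * ((r-t+1)^(d-q) * ggF n r k τ) := by
            have := Finset.sum_le_card_nsmul _ _ _ hterm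
            simpa [smul_eq_mul] using this
        _ ≤ (r-t+1)^q * ((r-t+1)^(d-q) * ggF n r k τ) := mul_le_mul_left hbranch _
        _ = (r-t+1)^d * ggF n r k τ := by
            rw [← mul_assoc, ← pow_add, show q + (d - q) = d from by omega]
    · -- overshoot case
      by_cases hall : ∀ Q ∈ cand.powersetCard q,
          (F.filter (fun F' => P ∪ Q ⊆ F')).card = 0
      · have hz : ∑ Q ∈ cand.powersetCard q, (F.filter (fun F' => P ∪ Q ⊆ F')).card = 0 :=
          Finset.sum_eq_zero hall
        calc (F.filter (fun F' => P ⊆ F')).card ≤ _ := hstep1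
          _ = 0 := hz
          _ ≤ (r-t+1)^d * ggF n r k τ := Nat.zero_le _
      · push_neg at hall
        obtain ⟨Q₀, hQ₀, hz₀⟩ := hall
        obtain ⟨F₀', hF₀'⟩ := Finset.card_pos.mp (Nat.pos_of_ne_zero hz₀)
        obtain ⟨hF₀'F, hPQ₀⟩ := Finset.mem_filter.mp hF₀'
        have hpqr : P.card + q ≤ r := by
          have h1 := Finset.card_le_card hPQ₀
          rw [hQfacts Q₀ hQ₀, (mem_L_spec n r k (hFL hF₀'F)).2.1] at h1
          exact h1
        have hterm : ∀ Q ∈ cand.powersetCard q,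
            (F.filter (fun F' => P ∪ Q ⊆ F')).card ≤ ggF n r k (P.card + q) := by
          intro Q hQ
          by_cases hz : (F.filter (fun F' => P ∪ Q ⊆ F')).card = 0
          · rw [hz]; exact Nat.zero_le _
          · obtain ⟨F', hF'⟩ := Finset.card_pos.mp (Nat.pos_of_ne_zero hz)
            obtain ⟨hF'F, hPQ⟩ := Finset.mem_filter.mp hF'
            have hsigPQ : IsSigned n k (P ∪ Q) :=
              signed_subset (signed_of_mem_L (hFL hF'F)) hPQ
            have hleaf := (Finset.card_le_card
              (Finset.filter_subset_filter _ hFL)).trans (leaf_count n r k (P ∪ Q) hsigPQ)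
            rw [hQfacts Q hQ] at hleaf
            simpa [ggF_def] using hleaf
        calc (F.filter (fun F' => P ⊆ F')).card
            ≤ ∑ Q ∈ cand.powersetCard q, (F.filter (fun F' => P ∪ Q ⊆ F')).card := hstep1
          _ ≤ (cand.powersetCard q).card * ggF n r k (P.card + q) := by
              have := Finset.sum_le_card_nsmul _ _ _ hterm
              simpa [smul_eq_mul] using this
          _ ≤ (r-t+1)^q * ggF n r k (P.card + q) := mul_le_mul_left hbranch _
          _ = (r-t+1)^d * ((r-t+1)^(q-d) * ggF n r k (τ + (q-d))) := by
              rw [← mul_assoc, ← pow_add, show d + (q - d) = q from by omega,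
                show τ + (q - d) = P.card + q from by omega]
          _ ≤ (r-t+1)^d * ggF n r k τ :=
              mul_le_mul_right (hchain (q-d) τ hτt2 (by omega)) _
theorem bound_large_covering_number (n r k t : ℕ) (hn : 0 < n) (ht : 0 < t)
    (hnt : t + 2 ≤ n) (htr : t + 1 ≤ r) (hrn : r ≤ n) (hk2 : 2 ≤ k)
    (hkg : ((r : ℚ) - t + 3) * ((r : ℚ) - t - 1) / ((n : ℚ) - t - 1) *
        max (((t + 2).choose 2 : ℚ)) (((r : ℚ) - t + 1) / 2) ≤ (k : ℚ))
    (F : Finset (Finset (ℕ × ℕ))) (hF : IsMaximalTIntersecting n r k t F)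
    (hnontriv : ¬ IsTrivial n k t F)
    (htau : ∀ T, IsTCover n k t F T → t + 2 ≤ T.card) :
    F.card ≤ (r - t + 1) ^ 2 * (t + 2).choose 2 *
      (n - t - 2).choose (r - t - 2) * k ^ (r - t - 2) := by
  classical
  have hFL := hF.1
  have hint := hF.2.1
  -- F is nonempty
  have hFne : F.Nonempty := by
    by_contra hne
    rw [Finset.not_nonempty_iff_eq_empty] at hne
    apply hnontriv
    have hinj1 : Function.Injective (fun x : ℕ => ((x, 1) : ℕ × ℕ)) := by
      intro a b h; simpa using h
    have himg : (Msig t).image Prod.fst = Finset.Icc 1 t := by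
      unfold Msig
      rw [Finset.image_image]
      exact Finset.image_id
    have hcardM : (Msig t).card = t := by
      unfold Msig
      rw [Finset.card_image_of_injective _ hinj1, Nat.card_Icc]
      omega
    refine ⟨Msig t, ⟨?_, ?_⟩, hcardM, ?_⟩
    · intro p hp
      unfold Msig at hp
      obtain ⟨x, hx, rfl⟩ := Finset.mem_image.mp hp
      rw [Finset.mem_Icc] at hx
      unfold _root_.box
      exact Finset.mem_product.mpr
        ⟨Finset.mem_Icc.mpr ⟨hx.1, by omega⟩, Finset.mem_Icc.mpr ⟨le_refl 1, by omega⟩⟩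
    · rw [himg, hcardM, Nat.card_Icc]
      omega
    · intro A hA
      rw [hne] at hA
      exact absurd hA (Finset.notMem_empty _)
  obtain ⟨A₀, hA₀⟩ := hFne
  obtain ⟨hA₀box, hA₀card, hA₀img⟩ := mem_L_spec n r k (hFL hA₀)
  have hcov0 : IsTCover n k t F A₀ :=
    ⟨signed_of_mem_L (hFL hA₀), fun B hB => hint A₀ hA₀ B hB⟩
  have hrt2 : t + 2 ≤ r := by
    have h := htau A₀ hcov0
    rwa [hA₀card] at h
  -- minimum cover size τ
  have hex : ∃ c : ℕ, ∃ T, IsTCover n k t F T ∧ T.card = c := ⟨r, A₀, hcov0, hA₀card⟩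
  set τ := Nat.find hex with hτdef
  obtain ⟨Tm, hTmcov, hTmcard⟩ := Nat.find_spec hex
  have hτmin : ∀ T, IsTCover n k t F T → τ ≤ T.card :=
    fun T hT => Nat.find_le ⟨T, hT, rfl⟩
  have hτt2 : t + 2 ≤ τ := by
    have h := htau Tm hTmcov
    omega
  have hτr : τ ≤ r := by
    have h := hτmin A₀ hcov0
    rwa [hA₀card] at h
  -- witness extraction
  have hwit : ∀ P, IsSigned n k P → P.card < τ → ∃ A ∈ F, (P ∩ A).card < t := by
    intro P hPsig hPlt
    by_contra hcon
    push_neg at hcon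
    have hcov : IsTCover n k t F P := ⟨hPsig, fun A hA => hcon A hA⟩
    exact absurd (hτmin P hcov) (by omega)
  -- numeric inequalities from hkg
  have hC1 : t + 1 ≤ (t+2).choose 2 := by
    have h : (t+2).choose 2 = (t+1).choose 1 + (t+1).choose 2 := Nat.choose_succ_succ _ _
    rw [h, Nat.choose_one_right]
    omega
  have hdenpos : (0:ℚ) < (n:ℚ) - t - 1 := by
    have h : ((t:ℚ) + 2) ≤ (n:ℚ) := by exact_mod_cast hnt
    linarith
  have hAnn : (0:ℚ) ≤ ((r:ℚ) - t + 3) * ((r:ℚ) - t - 1) / ((n:ℚ) - t - 1) := by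
    have h : ((t:ℚ) + 2) ≤ (r:ℚ) := by exact_mod_cast hrt2
    apply div_nonneg (mul_nonneg (by linarith) (by linarith)) (by linarith)
  have hK1q : ((r:ℚ) - t + 3) * ((r:ℚ) - t - 1) * (((t+2).choose 2 : ℕ) : ℚ)
      ≤ (k:ℚ) * ((n:ℚ) - t - 1) := by
    have h1 : ((r:ℚ) - t + 3) * ((r:ℚ) - t - 1) / ((n:ℚ) - t - 1)
        * (((t+2).choose 2 : ℕ) : ℚ) ≤ (k:ℚ) := by
      refine le_trans ?_ hkg
      exact mul_le_mul_of_nonneg_left (le_max_left _ _) hAnn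
    rw [div_mul_eq_mul_div, div_le_iff₀ hdenpos] at h1
    linarith
  have hK1 : (r-t+3) * (r-t-1) * ((t+2).choose 2) ≤ k * (n-t-1) := by
    have c1 : ((r - t - 1 : ℕ) : ℚ) = (r:ℚ) - t - 1 := by
      rw [show r - t - 1 = r - (t+1) from by omega, Nat.cast_sub (by omega : t + 1 ≤ r)]
      push_cast; ring
    have c2 : ((n - t - 1 : ℕ) : ℚ) = (n:ℚ) - t - 1 := by
      rw [show n - t - 1 = n - (t+1) from by omega, Nat.cast_sub (by omega : t + 1 ≤ n)]
      push_cast; ring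
    have c3 : ((r - t + 3 : ℕ) : ℚ) = (r:ℚ) - t + 3 := by
      rw [Nat.cast_add, Nat.cast_sub (by omega : t ≤ r)]
      push_cast; ring
    have := hK1q
    rw [← c1, ← c2, ← c3] at this
    exact_mod_cast this
  -- scalar inequality S2'
  have hS2' : ∀ y, t + 2 ≤ y → y + 1 ≤ r →
      (r - y) * ((r-t+3) * ((t+2).choose 2)) ≤ k * (n - y) := by
    intro y hy hyr
    have hcr := cross_ineq (show t+1 ≤ y from by omega) hyr hrn
    have h4 : ((r-y) * ((r-t+3) * ((t+2).choose 2))) * (r-t-1)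
        ≤ (k * (n-y)) * (r-t-1) := by
      calc ((r-y) * ((r-t+3) * ((t+2).choose 2))) * (r-t-1)
          = (r - y) * ((r-t+3) * (r-t-1) * ((t+2).choose 2)) := by ring
        _ ≤ (r-y) * (k * (n-t-1)) := Nat.mul_le_mul_left _ hK1
        _ = k * ((r-y) * (n-t-1)) := by ring
        _ ≤ k * ((n-y) * (r-t-1)) := Nat.mul_le_mul_left _ hcr
        _ = (k * (n-y)) * (r-t-1) := by ring
    exact Nat.le_of_mul_le_mul_right h4 (by omega)
  have hS1 : ∀ y, t + 2 ≤ y → y + 1 ≤ r → (r-t+1) * (r-y) ≤ k * (n-y) := by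
    intro y hy hyr
    have h := hS2' y hy hyr
    calc (r-t+1) * (r-y) ≤ ((r-t+3) * ((t+2).choose 2)) * (r-y) := by
          apply Nat.mul_le_mul_right
          calc r-t+1 ≤ (r-t+3) * 1 := by omega
            _ ≤ (r-t+3) * ((t+2).choose 2) := Nat.mul_le_mul_left _ (by omega)
      _ = (r-y) * ((r-t+3) * ((t+2).choose 2)) := by ring
      _ ≤ k * (n-y) := h
  have hS2 : ∀ y, t + 2 ≤ y → y + 1 ≤ r →
      (y+1) * ((r-t+1) * (r-y)) ≤ (y+1-t) * (k * (n-y)) := by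
    intro y hy hyr
    have h := hS2' y hy hyr
    have h1 : y + 1 ≤ (y+1-t) * (t+1) := by
      have h2 : (y+1-t) * (t+1) = (y+1-t) * t + (y+1-t) := by ring
      have h3 : t ≤ (y+1-t) * t := Nat.le_mul_of_pos_left t (by omega)
      omega
    have h3 : (t+1) * (r-t+1) ≤ ((t+2).choose 2) * (r-t+3) :=
      Nat.mul_le_mul hC1 (by omega)
    calc (y+1) * ((r-t+1) * (r-y))
        = ((y+1) * (r-t+1)) * (r-y) := by ring
      _ ≤ (((y+1-t) * (t+1)) * (r-t+1)) * (r-y) :=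
          Nat.mul_le_mul_right _ (Nat.mul_le_mul_right _ h1)
      _ = (y+1-t) * (((t+1) * (r-t+1)) * (r-y)) := by ring
      _ ≤ (y+1-t) * ((((t+2).choose 2) * (r-t+3)) * (r-y)) :=
          Nat.mul_le_mul_left _ (Nat.mul_le_mul_right _ h3)
      _ = (y+1-t) * ((r-y) * ((r-t+3) * ((t+2).choose 2))) := by ring
      _ ≤ (y+1-t) * (k * (n-y)) := Nat.mul_le_mul_left _ h
  have hchain : ∀ i y, t + 2 ≤ y → y + i ≤ r →
      (r-t+1)^i * ggF n r k (y+i) ≤ ggF n r k y := gg_chain n r k t hrn hS1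
  -- root decomposition
  have hroot : F.card ≤ ∑ S ∈ Tm.powersetCard t, (F.filter (fun F' => S ⊆ F')).card := by
    have hsub : F ⊆ (Tm.powersetCard t).biUnion
        (fun S => F.filter (fun F' => S ⊆ F')) := by
      intro F' hF'
      have ht' : t ≤ (Tm ∩ F').card := hTmcov.2 F' hF'
      obtain ⟨S, hSsub, hScard⟩ := Finset.exists_subset_card_eq ht'
      refine Finset.mem_biUnion.mpr ⟨S, ?_, ?_⟩
      · exact Finset.mem_powersetCard.mpr ⟨hSsub.trans Finset.inter_subset_left, hScard⟩
      · exact Finset.mem_filter.mpr ⟨hF', hSsub.trans Finset.inter_subset_right⟩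
    exact (Finset.card_le_card hsub).trans Finset.card_biUnion_le
  have hmain := main_bound n r k t τ F hFL hint hwit hτt2 (by omega) hrn hchain
  have hperS : ∀ S ∈ Tm.powersetCard t,
      (F.filter (fun F' => S ⊆ F')).card ≤ (r-t+1)^(τ-t) * ggF n r k τ := by
    intro S hS
    obtain ⟨hSsub, hScard⟩ := Finset.mem_powersetCard.mp hS
    exact hmain (τ - t) S (signed_subset hTmcov.1 hSsub) (by omega)
  have h1 : F.card ≤ (τ.choose t) * ((r-t+1)^(τ-t) * ggF n r k τ) := by
    calc F.card ≤ ∑ S ∈ Tm.powersetCard t, (F.filter (fun F' => S ⊆ F')).card := hroot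
      _ ≤ (Tm.powersetCard t).card * ((r-t+1)^(τ-t) * ggF n r k τ) := by
          have := Finset.sum_le_card_nsmul _ _ _ hperS
          simpa [smul_eq_mul] using this
      _ = τ.choose t * ((r-t+1)^(τ-t) * ggF n r k τ) := by
          rw [Finset.card_powersetCard, hTmcard]
  have h2 := gg_final n r k t hrn hS2 (τ - t) (by omega) (by omega)
  rw [show t + (τ - t) = τ from by omega] at h2
  have h3 := h1.trans h2
  calc F.card ≤ (t+2).choose 2 * ((r-t+1)^2 * ggF n r k (t+2)) := h3
    _ = (r - t + 1) ^ 2 * (t + 2).choose 2 *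
        (n - t - 2).choose (r - t - 2) * k ^ (r - t - 2) := by
      rw [ggF_def, show n - (t+2) = n - t - 2 from by omega,
        show r - (t+2) = r - t - 2 from by omega]
      ring
end
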